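/- arXiv:2202.04756 — 3 statements merged into one kernel-verified Lean document; each statement's English description precedes it below -/
import Mathlib

section
/- For every finite simple graph X with at least one edge, the map sending each dart (u,v) of X to the underlying edge {u,v} is a graph homomorphism from γ(X) onto L(X) that maps the neighborhood of each dart bijectively onto the neighborhood of its image, and every vertex of L(X) has exactly two preimages; that is, the symmetric edge graph γ(X) is a double cover of the line graph L(X). -/
open SimpleGraph

/-- The symmetric edge graph `γ(X)` of a simple graph `X`: its vertices are the darts
(ordered pairs of adjacent vertices) of `X`, and two darts `(u,v)` and `(u',v')` are adjacent
iff (`v = u'` and `u ≠ v'`) or (`v' = u` and `u' ≠ v`). -/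
def symEdgeGraph {V : Type*} (X : SimpleGraph V) : SimpleGraph X.Dart where
  Adj d d' := (d.snd = d'.fst ∧ d.fst ≠ d'.snd) ∨ (d'.snd = d.fst ∧ d'.fst ≠ d.snd)
  symm := ⟨fun d d' h => Or.symm h⟩
  loopless := ⟨by
    rintro d (⟨h1, -⟩ | ⟨h1, -⟩) <;> exact X.irrefl (v := d.fst) (h1 ▸ d.adj)⟩

/-- The symmetric edge graph `γ(X)` is a double cover of the line graph `L(X)`:
the map sending each dart `(u,v)` to the underlying edge `{u,v}` is a graph homomorphism
from `γ(X)` to `L(X)` mapping the neighborhood of each dart bijectively onto the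
neighborhood of its image, and every vertex of `L(X)` has exactly two preimages. -/
theorem symEdgeGraph_isDoubleCover_lineGraph {V : Type*} [Fintype V]
    (X : SimpleGraph V) (hE : X.edgeSet.Nonempty) :
    ∃ f : symEdgeGraph X →g X.lineGraph,
      (∀ d : X.Dart, (f d : Sym2 V) = d.edge) ∧
      (∀ d : X.Dart,
        Set.BijOn f ((symEdgeGraph X).neighborSet d) (X.lineGraph.neighborSet (f d))) ∧
      (∀ e : X.edgeSet, (⇑f ⁻¹' {e}).ncard = 2) := by
  -- the edge of a dart adjacent to it is distinct
  have hne : ∀ d d' : X.Dart, (symEdgeGraph X).Adj d d' → d.edge ≠ d'.edge := by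
    intro d d' hdd' he
    rcases (dart_edge_eq_iff d d').mp he with rfl | rfl
    · exact (symEdgeGraph X).irrefl hdd'
    · rcases hdd' with ⟨h1, h2⟩ | ⟨h1, h2⟩
      · exact h2 rfl
      · exact h2 rfl
  have hadj : ∀ d d' : X.Dart, (symEdgeGraph X).Adj d d' →
      X.lineGraph.Adj ⟨d.edge, d.edge_mem⟩ ⟨d'.edge, d'.edge_mem⟩ := by
    intro d d' hdd'
    refine ⟨fun h => hne d d' hdd' (congrArg Subtype.val h), ?_⟩
    have hm : ∀ d0 : X.Dart, d0.fst ∈ d0.edge ∧ d0.snd ∈ d0.edge := by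
      rintro ⟨⟨a, b⟩, hab⟩; simp
    rcases hdd' with ⟨h1, -⟩ | ⟨h1, -⟩
    · exact ⟨d.snd, (hm d).2, h1 ▸ (hm d').1⟩
    · exact ⟨d.fst, (hm d).1, h1 ▸ (hm d').2⟩
  refine ⟨⟨fun d => ⟨d.edge, d.edge_mem⟩, fun h => hadj _ _ h⟩, fun d => rfl, ?_, ?_⟩
  · intro d
    refine ⟨fun d' hd' => hadj d d' hd', ?_, ?_⟩
    · -- injectivity
      intro d₁ h₁ d₂ h₂ hf
      have he : d₁.edge = d₂.edge := congrArg Subtype.val hf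
      rcases (dart_edge_eq_iff d₁ d₂).mp he with rfl | rfl
      · rfl
      · exfalso
        simp only [symEdgeGraph, SimpleGraph.neighborSet, Set.mem_setOf_eq,
          Dart.symm_toProd, Prod.fst_swap, Prod.snd_swap] at h₁ h₂
        rcases h₁ with ⟨a1, a2⟩ | ⟨a1, a2⟩ <;> rcases h₂ with ⟨b1, b2⟩ | ⟨b1, b2⟩
        · exact d₂.adj.ne (b1.symm.trans a1)
        · exact d.adj.ne (a1.trans b1).symm
        · exact d.adj.ne (b1.trans a1).symm
        · exact d₂.adj.ne (a1.trans b1.symm)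
    · -- surjectivity
      rintro ⟨e, he⟩ hadj'
      rw [SimpleGraph.mem_neighborSet, lineGraph_adj_iff_exists] at hadj'
      obtain ⟨hne', w, hw1, hw2⟩ := hadj'
      have hw1' : w ∈ d.edge := hw1
      have hee : d.edge ≠ e := fun h => hne' (Subtype.ext h)
      rw [Dart.edge, Sym2.mem_iff] at hw1'
      rcases hw1' with rfl | rfl
      · -- w = d.fst
        obtain ⟨b, rfl⟩ := Sym2.mem_iff_exists.mp hw2
        have hb : X.Adj d.fst b := X.mem_edgeSet.mp he
        refine ⟨⟨(b, d.fst), hb.symm⟩, Or.inr ⟨rfl, fun h => ?_⟩, ?_⟩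
        · have h' : b = d.snd := h
          exact hee (by rw [h']; rfl)
        · exact Subtype.ext Sym2.eq_swap
      · -- w = d.snd
        obtain ⟨b, rfl⟩ := Sym2.mem_iff_exists.mp hw2
        have hb : X.Adj d.snd b := X.mem_edgeSet.mp he
        refine ⟨⟨(d.snd, b), hb⟩, Or.inl ⟨rfl, fun h => ?_⟩, Subtype.ext rfl⟩
        have h' : d.fst = b := h
        exact hee (by rw [← h']; exact Sym2.eq_swap)
  · rintro ⟨e, he⟩
    induction e with
    | _ a b =>
      have hab : X.Adj a b := X.mem_edgeSet.mp he
      have : (fun d : X.Dart => (⟨d.edge, d.edge_mem⟩ : X.edgeSet)) ⁻¹' {⟨s(a,b), he⟩} =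
          {⟨(a, b), hab⟩, ⟨(b, a), hab.symm⟩} := by
        ext d
        simp only [Set.mem_preimage, Set.mem_singleton_iff, Set.mem_insert_iff,
          Subtype.ext_iff, dart_edge_eq_mk'_iff']
        constructor
        · rintro (⟨h1, h2⟩ | ⟨h1, h2⟩)
          · left; exact Dart.ext _ _ (Prod.ext h1 h2)
          · right; exact Dart.ext _ _ (Prod.ext h1 h2)
        · rintro (rfl | rfl)
          · left; exact ⟨rfl, rfl⟩
          · right; exact ⟨rfl, rfl⟩
      rw [show (⇑(⟨fun d => ⟨d.edge, d.edge_mem⟩, fun h => hadj _ _ h⟩ :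
          symEdgeGraph X →g X.lineGraph)) = fun d : X.Dart => (⟨d.edge, d.edge_mem⟩ : X.edgeSet)
          from rfl, this]
      rw [Set.ncard_pair]
      exact fun h => hab.ne (congrArg (Prod.fst ∘ Dart.toProd) h)
end

section
/- For every finite simple graph X with at least one edge, the map sending each edge {(u,0),(v,1)} of the Kronecker double cover X'' to the edge {u,v} of X is a graph homomorphism from L(X'') onto L(X) that maps the neighborhood of each vertex bijectively onto the neighborhood of its image, and every vertex of L(X) has exactly two preimages; that is, L(X'') is a double cover of L(X). -/
open SimpleGraph

/-- The Kronecker double cover `X''` of a simple graph `X`: the tensor product `X × K₂`.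
Its vertices are pairs `(v, i)` with `v` a vertex of `X` and `i : Bool`, and `(v, i)` is
adjacent to `(w, j)` iff `v` is adjacent to `w` in `X` and `i ≠ j`. -/
def kroneckerCover {V : Type*} (X : SimpleGraph V) : SimpleGraph (V × Bool) where
  Adj a b := X.Adj a.1 b.1 ∧ a.2 ≠ b.2
  symm := ⟨fun _ _ h => ⟨h.1.symm, h.2.symm⟩⟩
  loopless := ⟨fun _ h => h.2 rfl⟩

section Aux

variable {V : Type*} {X : SimpleGraph V}

lemma kc_adj {a b : V × Bool} : (kroneckerCover X).Adj a b ↔ X.Adj a.1 b.1 ∧ a.2 ≠ b.2 := Iff.rfl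

lemma map_fst_mem {e : Sym2 (V × Bool)} (he : e ∈ (kroneckerCover X).edgeSet) :
    Sym2.map Prod.fst e ∈ X.edgeSet := by
  induction e using Sym2.ind with
  | _ a b =>
    rw [SimpleGraph.mem_edgeSet] at he
    rw [Sym2.map_pair_eq, SimpleGraph.mem_edgeSet]
    exact he.1

/-- distinct cover edges sharing a vertex have distinct images -/
lemma core_ne {e₁ e₂ : Sym2 (V × Bool)} (h₁ : e₁ ∈ (kroneckerCover X).edgeSet)
    (h₂ : e₂ ∈ (kroneckerCover X).edgeSet)
    (hne : e₁ ≠ e₂) (hx : ∃ x, x ∈ e₁ ∧ x ∈ e₂) :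
    Sym2.map Prod.fst e₁ ≠ Sym2.map Prod.fst e₂ := by
  obtain ⟨x, hx1, hx2⟩ := hx
  obtain ⟨y₁, rfl⟩ := Sym2.mem_iff_exists.mp hx1
  obtain ⟨y₂, rfl⟩ := Sym2.mem_iff_exists.mp hx2
  intro hmap
  simp only [Sym2.map_pair_eq] at hmap
  have h1 : y₁.1 = y₂.1 := Sym2.congr_right.mp hmap
  rw [SimpleGraph.mem_edgeSet] at h₁ h₂
  have hb1 : y₁.2 = !x.2 := by
    have := h₁.2; revert this; cases x.2 <;> cases y₁.2 <;> simp
  have hb2 : y₂.2 = !x.2 := by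
    have := h₂.2; revert this; cases x.2 <;> cases y₂.2 <;> simp
  exact hne (by rw [Sym2.congr_right]; exact Prod.ext h1 (hb1.trans hb2.symm))

lemma pair_eq_of_mem {g : Sym2 V} {p q : V} (hp : p ∈ g) (hq : q ∈ g) (hpq : p ≠ q) :
    g = s(p, q) := by
  obtain ⟨y, rfl⟩ := Sym2.mem_iff_exists.mp hp
  rcases Sym2.mem_iff.mp hq with h | h
  · exact absurd h.symm hpq
  · rw [h]

lemma key_inj {a b : V × Bool} (hab : (kroneckerCover X).Adj a b)
    {e₁ e₂ : Sym2 (V × Bool)} (h₁ : e₁ ∈ (kroneckerCover X).edgeSet)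
    (h₂ : e₂ ∈ (kroneckerCover X).edgeSet)
    (hg : Sym2.map Prod.fst e₁ = Sym2.map Prod.fst e₂)
    (hgne : Sym2.map Prod.fst e₁ ≠ s(a.1, b.1))
    (hx₁ : ∃ x, x ∈ e₁ ∧ x ∈ s(a, b)) (hx₂ : ∃ x, x ∈ e₂ ∧ x ∈ s(a, b)) : e₁ = e₂ := by
  by_contra hne
  obtain ⟨x₁, hx₁e, hx₁m⟩ := hx₁
  obtain ⟨x₂, hx₂e, hx₂m⟩ := hx₂
  have hmem₁ : x₁.1 ∈ Sym2.map Prod.fst e₁ := Sym2.mem_map.mpr ⟨x₁, hx₁e, rfl⟩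
  have hmem₂ : x₂.1 ∈ Sym2.map Prod.fst e₁ := hg ▸ Sym2.mem_map.mpr ⟨x₂, hx₂e, rfl⟩
  have hab1 : a.1 ≠ b.1 := hab.1.ne
  rcases Sym2.mem_iff.mp hx₁m with h1 | h1 <;> rcases Sym2.mem_iff.mp hx₂m with h2 | h2
  · exact core_ne h₁ h₂ hne ⟨x₁, hx₁e, h1 ▸ h2 ▸ hx₂e⟩ hg
  · exact hgne (pair_eq_of_mem (h1 ▸ hmem₁) (h2 ▸ hmem₂) hab1)
  · exact hgne (pair_eq_of_mem (h2 ▸ hmem₂) (h1 ▸ hmem₁) hab1)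
  · exact core_ne h₁ h₂ hne ⟨x₁, hx₁e, h1 ▸ h2 ▸ hx₂e⟩ hg

lemma key_surj {a b : V × Bool} (hab : (kroneckerCover X).Adj a b) {g : Sym2 V}
    (hg : g ∈ X.edgeSet) (hx : ∃ w, w ∈ g ∧ w ∈ s(a.1, b.1)) :
    ∃ e' ∈ (kroneckerCover X).edgeSet,
      Sym2.map Prod.fst e' = g ∧ ∃ x, x ∈ e' ∧ x ∈ s(a, b) := by
  obtain ⟨w, hwg, hwab⟩ := hx
  obtain ⟨q, rfl⟩ := Sym2.mem_iff_exists.mp hwg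
  rw [SimpleGraph.mem_edgeSet] at hg
  rcases Sym2.mem_iff.mp hwab with h | h
  · refine ⟨s(a, (q, !a.2)), ?_, ?_, a, ?_, ?_⟩
    · rw [SimpleGraph.mem_edgeSet, kc_adj]
      exact ⟨h ▸ hg, by simp⟩
    · rw [Sym2.map_pair_eq, h]
    · simp
    · simp
  · refine ⟨s(b, (q, !b.2)), ?_, ?_, b, ?_, ?_⟩
    · rw [SimpleGraph.mem_edgeSet, kc_adj]
      exact ⟨h ▸ hg, by simp⟩
    · rw [Sym2.map_pair_eq, h]
    · simp
    · simp

lemma sym2_rep (e : Sym2 (V × Bool)) : ∃ a b, e = s(a, b) :=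
  Sym2.ind (fun a b => ⟨a, b, rfl⟩) e

lemma fiber_classify {u v : V} (huv : u ≠ v) {e' : Sym2 (V × Bool)}
    (he' : e' ∈ (kroneckerCover X).edgeSet)
    (hmap : Sym2.map Prod.fst e' = s(u, v)) :
    e' = s((u, false), (v, true)) ∨ e' = s((u, true), (v, false)) := by
  have hu : u ∈ Sym2.map Prod.fst e' := by rw [hmap]; simp
  obtain ⟨x, hxe, hxu⟩ := Sym2.mem_map.mp hu
  obtain ⟨z, rfl⟩ := Sym2.mem_iff_exists.mp hxe
  rw [Sym2.map_pair_eq, hxu] at hmap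
  have hz : z.1 = v := Sym2.congr_right.mp hmap
  rw [SimpleGraph.mem_edgeSet, kc_adj] at he'
  have hx : x = (u, x.2) := Prod.ext hxu rfl
  have hzb : z = (v, !x.2) := by
    refine Prod.ext hz ?_
    have := he'.2; revert this; cases x.2 <;> cases z.2 <;> simp
  rw [hx, hzb]
  cases x.2 <;> simp


def coverLineHom (X : SimpleGraph V) : (kroneckerCover X).lineGraph →g X.lineGraph where
  toFun e := ⟨Sym2.map Prod.fst e.1, map_fst_mem e.2⟩
  map_rel' := by
    rintro e₁ e₂ h
    rw [lineGraph_adj_iff_exists] at h ⊢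
    obtain ⟨hne, x, hx1, hx2⟩ := h
    refine ⟨?_, x.1, Sym2.mem_map.mpr ⟨x, hx1, rfl⟩, Sym2.mem_map.mpr ⟨x, hx2, rfl⟩⟩
    intro hcon
    exact core_ne e₁.2 e₂.2 (fun h => hne (Subtype.ext h)) ⟨x, hx1, hx2⟩
      (Subtype.ext_iff.mp hcon)

lemma coverLineHom_val (e : (kroneckerCover X).edgeSet) :
    (coverLineHom X e : Sym2 V) = Sym2.map Prod.fst (e : Sym2 (V × Bool)) := rfl

lemma coverLineHom_bijOn (e : (kroneckerCover X).edgeSet) :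
    Set.BijOn (coverLineHom X) ((kroneckerCover X).lineGraph.neighborSet e)
      (X.lineGraph.neighborSet (coverLineHom X e)) := by
  obtain ⟨a, b, hab'⟩ := sym2_rep e.1
  have hab : (kroneckerCover X).Adj a b := by
    have := e.2; rw [hab', SimpleGraph.mem_edgeSet] at this; exact this
  have himg : Sym2.map Prod.fst e.1 = s(a.1, b.1) := by rw [hab', Sym2.map_pair_eq]
  refine ⟨fun g hg => ?_, fun g₁ hg₁ g₂ hg₂ hf => ?_, fun g hg => ?_⟩
  · -- MapsTo
    exact (coverLineHom X).map_rel (hg : (kroneckerCover X).lineGraph.Adj e g)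
  · -- InjOn
    have hg₁' : (kroneckerCover X).lineGraph.Adj e g₁ := hg₁
    have hg₂' : (kroneckerCover X).lineGraph.Adj e g₂ := hg₂
    rw [lineGraph_adj_iff_exists] at hg₁' hg₂'
    obtain ⟨hne₁, x₁, hx₁e, hx₁g⟩ := hg₁'
    obtain ⟨hne₂, x₂, hx₂e, hx₂g⟩ := hg₂'
    have hmapseq : Sym2.map Prod.fst g₁.1 = Sym2.map Prod.fst g₂.1 :=
      Subtype.ext_iff.mp hf
    have hne' := core_ne e.2 g₁.2 (fun h => hne₁ (Subtype.ext h)) ⟨x₁, hx₁e, hx₁g⟩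
    have hgne : Sym2.map Prod.fst g₁.1 ≠ s(a.1, b.1) := fun hcon =>
      hne' (himg.trans hcon.symm)
    exact Subtype.ext (key_inj hab g₁.2 g₂.2 hmapseq hgne
      ⟨x₁, hx₁g, hab' ▸ hx₁e⟩ ⟨x₂, hx₂g, hab' ▸ hx₂e⟩)
  · -- SurjOn
    have hg' : X.lineGraph.Adj (coverLineHom X e) g := hg
    rw [lineGraph_adj_iff_exists] at hg'
    obtain ⟨hne, w, hwfe, hwg⟩ := hg'
    rw [coverLineHom_val, himg] at hwfe
    obtain ⟨e', he', hmape', x, hx1, hx2⟩ := key_surj hab g.2 ⟨w, hwg, hwfe⟩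
    refine ⟨⟨e', he'⟩, ?_, Subtype.ext hmape'⟩
    show (kroneckerCover X).lineGraph.Adj e ⟨e', he'⟩
    rw [lineGraph_adj_iff_exists]
    refine ⟨fun hcon => hne ?_, x, hab' ▸ hx2, hx1⟩
    apply Subtype.ext
    rw [coverLineHom_val, show ((g : X.edgeSet) : Sym2 V) = g.1 from rfl, ← hmape',
      Subtype.ext_iff.mp hcon]

lemma coverLineHom_fiber (e : X.edgeSet) :
    (⇑(coverLineHom X) ⁻¹' {e}).ncard = 2 := by
  obtain ⟨g, hg⟩ := e
  obtain ⟨u, v, rfl⟩ : ∃ u v, g = s(u, v) := Sym2.ind (fun a b => ⟨a, b, rfl⟩) g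
  have huv : X.Adj u v := by have h := hg; rwa [SimpleGraph.mem_edgeSet] at h
  have hE0 : s(((u : V), false), (v, true)) ∈ (kroneckerCover X).edgeSet := by
    rw [SimpleGraph.mem_edgeSet, kc_adj]; exact ⟨huv, by simp⟩
  have hE1 : s(((u : V), true), (v, false)) ∈ (kroneckerCover X).edgeSet := by
    rw [SimpleGraph.mem_edgeSet, kc_adj]; exact ⟨huv, by simp⟩
  have hset : (⇑(coverLineHom X) ⁻¹' {⟨s(u, v), hg⟩}) = {⟨_, hE0⟩, ⟨_, hE1⟩} := by
    ext e'
    simp only [Set.mem_preimage, Set.mem_singleton_iff, Set.mem_insert_iff,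
      Subtype.ext_iff, coverLineHom_val]
    constructor
    · intro h
      exact fiber_classify huv.ne e'.2 h
    · rintro (h | h) <;> rw [h, Sym2.map_pair_eq] <;> simp [Sym2.eq_iff]
  rw [hset]
  refine Set.ncard_pair ?_
  intro hcon
  rw [Subtype.ext_iff, Sym2.eq_iff] at hcon
  rcases hcon with ⟨h1, _⟩ | ⟨h1, _⟩
  · exact Bool.false_ne_true (congrArg Prod.snd h1)
  · exact huv.ne (congrArg Prod.fst h1)


end Aux

/-- `L(X'')` is a double cover of `L(X)`: the map sending each edge `{(u,i),(v,j)}` of the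
Kronecker double cover `X''` to the edge `{u,v}` of `X` is a graph homomorphism from
`L(X'')` to `L(X)` mapping neighborhoods bijectively onto neighborhoods, and every
vertex of `L(X)` has exactly two preimages. -/
theorem lineGraph_kroneckerCover_isDoubleCover {V : Type*} [Fintype V]
    (X : SimpleGraph V) (hE : X.edgeSet.Nonempty) :
    ∃ f : (kroneckerCover X).lineGraph →g X.lineGraph,
      (∀ e : (kroneckerCover X).edgeSet, (f e : Sym2 V) = Sym2.map Prod.fst (e : Sym2 (V × Bool))) ∧
      (∀ e : (kroneckerCover X).edgeSet,
        Set.BijOn f ((kroneckerCover X).lineGraph.neighborSet e) (X.lineGraph.neighborSet (f e))) ∧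
      (∀ e : X.edgeSet, (⇑f ⁻¹' {e}).ncard = 2) :=
  ⟨coverLineHom X, coverLineHom_val, coverLineHom_bijOn, coverLineHom_fiber⟩
end

section
/- Let X be a finite connected simple graph with at least one edge. Then L(X'') is isomorphic to L(X)'' if and only if X is isomorphic to a cycle graph Cₙ (n ≥ 3) or to a path graph Pₙ (n ≥ 2). -/
open SimpleGraph

namespace KCProof

variable {V : Type*}

/-- the type of "darts": ordered adjacent pairs -/
def Dt (X : SimpleGraph V) := {q : V × V // X.Adj q.1 q.2}

open Classical in
/-- next vertex: a neighbor of `b` other than `a` if one exists, else `a` (reflect). -/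
noncomputable def nxt (X : SimpleGraph V) (a b : V) : V :=
  if h : ∃ w, X.Adj b w ∧ w ≠ a then h.choose else a

lemma nxt_adj {X : SimpleGraph V} {a b : V} (hab : X.Adj a b) : X.Adj b (nxt X a b) := by
  unfold nxt
  split_ifs with h
  · exact h.choose_spec.1
  · exact hab.symm

lemma nxt_eq_self_iff {X : SimpleGraph V} {a b : V} :
    nxt X a b = a ↔ ∀ w, X.Adj b w → w = a := by
  unfold nxt
  split_ifs with h
  · constructor
    · intro he; exact absurd he h.choose_spec.2
    · intro hall; exact absurd (hall _ h.choose_spec.1) h.choose_spec.2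
  · push_neg at h
    constructor
    · intro _ w hw
      by_contra hne
      exact hne (h w hw)
    · intro _; rfl

section WithDeg

variable {X : SimpleGraph V}
  (Hdeg : ∀ v a b c : V, X.Adj v a → X.Adj v b → X.Adj v c → a = b ∨ a = c ∨ b = c)

include Hdeg in
lemma nxt_unique {a b w : V} (hab : X.Adj a b) (hw : X.Adj b w) (hwa : w ≠ a) :
    nxt X a b = w := by
  unfold nxt
  have h : ∃ w, X.Adj b w ∧ w ≠ a := ⟨w, hw, hwa⟩
  rw [dif_pos h]
  rcases Hdeg b h.choose w a h.choose_spec.1 hw hab.symm with h1 | h1 | h1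
  · exact h1
  · exact absurd h1 h.choose_spec.2
  · exact absurd h1 hwa

include Hdeg in
lemma nxt_nxt {a b : V} (hab : X.Adj a b) : nxt X (nxt X a b) b = a := by
  by_cases h : nxt X a b = a
  · rw [h]; exact h
  · exact nxt_unique Hdeg (nxt_adj hab).symm hab.symm (Ne.symm h)

end WithDeg

/-- step along the walk -/
noncomputable def stp (X : SimpleGraph V) : Dt X → Dt X :=
  fun q => ⟨(q.1.2, nxt X q.1.1 q.1.2), nxt_adj q.2⟩

/-- swap a dart -/
def swD (X : SimpleGraph V) : Dt X → Dt X := fun q => ⟨(q.1.2, q.1.1), q.2.symm⟩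

@[simp] lemma swD_swD (X : SimpleGraph V) (q : Dt X) : swD X (swD X q) = q := rfl

lemma Dt.ext {X : SimpleGraph V} {q r : Dt X} (h1 : q.1.1 = r.1.1) (h2 : q.1.2 = r.1.2) :
    q = r := Subtype.ext (Prod.ext h1 h2)

section WithDeg2

variable {X : SimpleGraph V}
  (Hdeg : ∀ v a b c : V, X.Adj v a → X.Adj v b → X.Adj v c → a = b ∨ a = c ∨ b = c)

include Hdeg in
lemma stp_left_inv : ∀ q : Dt X, swD X (stp X (swD X (stp X q))) = q := by
  rintro ⟨⟨a, b⟩, hab⟩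
  apply Dt.ext
  · exact nxt_nxt Hdeg hab
  · rfl

include Hdeg in
lemma stp_right_inv : ∀ q : Dt X, stp X (swD X (stp X (swD X q))) = q := by
  rintro ⟨⟨a, b⟩, hab⟩
  apply Dt.ext
  · rfl
  · exact nxt_nxt Hdeg hab.symm

/-- the step as an equivalence -/
noncomputable def stpE : Dt X ≃ Dt X where
  toFun := stp X
  invFun := fun q => swD X (stp X (swD X q))
  left_inv := stp_left_inv Hdeg
  right_inv := stp_right_inv Hdeg

include Hdeg in
lemma stp_periodic [Finite V] (q : Dt X) : q ∈ Function.periodicPts (stp X) := by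
  have : Finite (Dt X) := by unfold Dt; infer_instance
  have : Fintype (Dt X) := Fintype.ofFinite _
  set σ : Equiv.Perm (Dt X) := stpE Hdeg
  refine ⟨orderOf σ, orderOf_pos σ, ?_⟩
  show (stp X)^[orderOf σ] q = q
  have h1 : (stp X)^[orderOf σ] = ⇑(σ ^ orderOf σ) := by
    rw [← Equiv.Perm.iterate_eq_pow]; rfl
  rw [h1, pow_orderOf_eq_one σ]; rfl

end WithDeg2

section Walk

variable {V : Type*} [Finite V] {X : SimpleGraph V} {v₀ w₀ : V}

/-- the period of the walk starting along `v₀ → w₀` -/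
noncomputable def per (X : SimpleGraph V) {v₀ w₀ : V} (hvw : X.Adj v₀ w₀) : ℕ :=
  Function.minimalPeriod (stp X) ⟨(v₀, w₀), hvw⟩

/-- the dart at time `x` -/
noncomputable def HH (hvw : X.Adj v₀ w₀) : ZMod (per X hvw) → Dt X :=
  fun x => (stp X)^[x.val] ⟨(v₀, w₀), hvw⟩

/-- the vertex at time `x` -/
noncomputable def gg (hvw : X.Adj v₀ w₀) : ZMod (per X hvw) → V :=
  fun x => (HH hvw x).1.1

variable (Hdeg : ∀ v a b c : V, X.Adj v a → X.Adj v b → X.Adj v c → a = b ∨ a = c ∨ b = c)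
variable (hvw : X.Adj v₀ w₀)

include Hdeg in
lemma per_pos : 0 < per X hvw :=
  Function.minimalPeriod_pos_of_mem_periodicPts (stp_periodic Hdeg _)

lemma HH_cast (t : ℕ) : HH hvw (t : ZMod (per X hvw)) = (stp X)^[t] ⟨(v₀, w₀), hvw⟩ := by
  unfold HH
  rw [ZMod.val_natCast]
  exact Function.iterate_mod_minimalPeriod_eq

include Hdeg in
lemma HH_inj : Function.Injective (HH hvw) := by
  haveI : NeZero (per X hvw) := ⟨(per_pos Hdeg hvw).ne'⟩
  intro x y h
  have hx := ZMod.val_lt x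
  have hy := ZMod.val_lt y
  have := Function.iterate_injOn_Iio_minimalPeriod (f := stp X) (x := (⟨(v₀, w₀), hvw⟩ : Dt X))
    (Set.mem_Iio.2 hx) (Set.mem_Iio.2 hy) h
  exact ZMod.val_injective _ this

include Hdeg in
lemma HH_step (x : ZMod (per X hvw)) : HH hvw (x + 1) = stp X (HH hvw x) := by
  haveI : NeZero (per X hvw) := ⟨(per_pos Hdeg hvw).ne'⟩
  have hx : ((x.val : ℕ) : ZMod (per X hvw)) = x := ZMod.natCast_rightInverse x
  rw [← hx, ← Nat.cast_one, ← Nat.cast_add, HH_cast, HH_cast]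
  exact Function.iterate_succ_apply' _ _ _

include Hdeg in
lemma HH_pred (x : ZMod (per X hvw)) :
    HH hvw (x - 1) = swD X (stp X (swD X (HH hvw x))) := by
  have h1 : HH hvw x = stp X (HH hvw (x - 1)) := by
    rw [← HH_step Hdeg hvw (x - 1), sub_add_cancel]
  rw [h1]
  exact (stp_left_inv Hdeg _).symm

include Hdeg in
lemma gg_snd (x : ZMod (per X hvw)) : (HH hvw x).1.2 = gg hvw (x + 1) := by
  show _ = (HH hvw (x+1)).1.1
  rw [HH_step Hdeg hvw x]
  rfl

include Hdeg in
lemma adj_gg (x : ZMod (per X hvw)) : X.Adj (gg hvw x) (gg hvw (x + 1)) := by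
  rw [← gg_snd Hdeg hvw x]
  exact (HH hvw x).2

include Hdeg in
lemma nxt_rel (x : ZMod (per X hvw)) :
    gg hvw (x + 1) = nxt X (gg hvw (x - 1)) (gg hvw x) := by
  have h1 : HH hvw x = stp X (HH hvw (x - 1)) := by
    rw [← HH_step Hdeg hvw (x - 1), sub_add_cancel]
  have h2 : (HH hvw x).1.2 = nxt X (HH hvw (x-1)).1.1 (HH hvw (x-1)).1.2 := by
    rw [h1]; rfl
  rw [gg_snd Hdeg hvw x] at h2
  rw [h2, gg_snd Hdeg hvw (x-1), sub_add_cancel]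
  rfl

include Hdeg in
lemma NB {x : ZMod (per X hvw)} {w : V} (hw : X.Adj (gg hvw x) w) :
    w = gg hvw (x + 1) ∨ w = gg hvw (x - 1) := by
  have h1 : X.Adj (gg hvw x) (gg hvw (x+1)) := adj_gg Hdeg hvw x
  have h2 : X.Adj (gg hvw x) (gg hvw (x-1)) := by
    have := adj_gg Hdeg hvw (x - 1)
    rw [sub_add_cancel] at this
    exact this.symm
  rcases Hdeg _ w (gg hvw (x+1)) (gg hvw (x-1)) hw h1 h2 with h | h | h
  · exact Or.inl h
  · exact Or.inr h
  · -- reflection: every neighbor equals gg (x-1)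
    right
    have hrefl : nxt X (gg hvw (x-1)) (gg hvw x) = gg hvw (x-1) := by
      rw [← nxt_rel Hdeg hvw x, h]
    exact (nxt_eq_self_iff.1 hrefl) w hw

include Hdeg in
lemma DICH {x y : ZMod (per X hvw)} (hxy : gg hvw x = gg hvw y) :
    HH hvw x = HH hvw y ∨ HH hvw x = swD X (HH hvw (y - 1)) := by
  have hx1 : X.Adj (gg hvw y) (gg hvw (x+1)) := hxy ▸ adj_gg Hdeg hvw x
  rcases NB Hdeg hvw hx1 with h | h
  · left
    apply Dt.ext hxy
    rw [gg_snd Hdeg hvw x, gg_snd Hdeg hvw y]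
    exact h
  · right
    apply Dt.ext
    · show gg hvw x = (HH hvw (y-1)).1.2
      rw [gg_snd Hdeg hvw (y-1), sub_add_cancel]
      exact hxy
    · show (HH hvw x).1.2 = (HH hvw (y-1)).1.1
      rw [gg_snd Hdeg hvw x]
      exact h

include Hdeg in
lemma PROP {x y : ZMod (per X hvw)} (h : HH hvw x = swD X (HH hvw y)) (t : ℕ) :
    HH hvw (x + t) = swD X (HH hvw (y - t)) := by
  induction t with
  | zero => simpa using h
  | succ t ih =>
    have e1 : (x + (t+1 : ℕ) : ZMod (per X hvw)) = (x + t) + 1 := by push_cast; ring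
    have e2 : (y - (t+1 : ℕ) : ZMod (per X hvw)) = (y - t) - 1 := by push_cast; ring
    rw [e1, e2, HH_step Hdeg hvw, ih, HH_pred Hdeg hvw, swD_swD]

lemma gg_zero : gg hvw 0 = v₀ := by
  show (HH hvw 0).1.1 = v₀
  have : HH hvw 0 = (stp X)^[0] ⟨(v₀, w₀), hvw⟩ := by
    rw [← Nat.cast_zero, HH_cast]
  rw [this]
  rfl

end Walk

/-- reachability closure -/
lemma reach_all {V : Type*} {X : SimpleGraph V} (hconn : X.Connected) (T : Set V) {v₀ : V}
    (h0 : v₀ ∈ T) (hcl : ∀ v w, v ∈ T → X.Adj v w → w ∈ T) : ∀ v, v ∈ T := by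
  have key : ∀ a b : V, X.Reachable a b → (a ∈ T → b ∈ T) := by
    intro a b hr
    obtain ⟨w⟩ := hr
    induction w with
    | nil => exact fun h => h
    | cons h q ih => exact fun ha => ih (hcl _ _ ha h)
  exact fun v => key v₀ v (hconn v₀ v) h0

section PathCase

variable {V : Type*} [Finite V] {X : SimpleGraph V} {v₀ w₀ : V}

lemma path_case (hconn : X.Connected)
    (Hdeg : ∀ v a b c : V, X.Adj v a → X.Adj v b → X.Adj v c → a = b ∨ a = c ∨ b = c)
    (hvw : X.Adj v₀ w₀) (hdeg1 : ∀ w, X.Adj v₀ w → w = w₀) :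
    ∃ n, 2 ≤ n ∧ Nonempty (X ≃g pathGraph n) := by
  haveI : NeZero (per X hvw) := ⟨(per_pos Hdeg hvw).ne'⟩
  have hppos : 0 < per X hvw := per_pos Hdeg hvw
  -- HH at 0
  have hH0 : HH hvw 0 = ⟨(v₀, w₀), hvw⟩ := by
    rw [show ((0 : ZMod (per X hvw))) = ((0 : ℕ) : ZMod (per X hvw)) by norm_cast, HH_cast]
    rfl
  -- mirror symmetry
  have M : ∀ t : ℕ, HH hvw (-1 - (t : ZMod (per X hvw))) = swD X (HH hvw t) := by
    intro t
    induction t with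
    | zero =>
      have e : (-1 - ((0:ℕ) : ZMod (per X hvw))) = 0 - 1 := by push_cast; ring
      rw [e, HH_pred Hdeg hvw, Nat.cast_zero, hH0]
      apply Dt.ext
      · show nxt X w₀ v₀ = w₀
        exact nxt_eq_self_iff.2 hdeg1
      · rfl
    | succ t ih =>
      have e : (-1 - ((t+1:ℕ) : ZMod (per X hvw))) = (-1 - (t : ZMod (per X hvw))) - 1 := by
        push_cast; ring
      have e2 : ((t+1:ℕ) : ZMod (per X hvw)) = (t : ZMod (per X hvw)) + 1 := by push_cast; ring
      rw [e, HH_pred Hdeg hvw, ih, e2, HH_step Hdeg hvw]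
      apply Dt.ext
      · rfl
      · rfl
  have M' : ∀ x : ZMod (per X hvw), HH hvw (-1 - x) = swD X (HH hvw x) := by
    intro x
    have hx : ((x.val : ℕ) : ZMod (per X hvw)) = x := ZMod.natCast_rightInverse x
    rw [← hx]
    exact M x.val
  have mir : ∀ x : ZMod (per X hvw), gg hvw (-x) = gg hvw x := by
    intro x
    have e : -x = -1 - (x - 1) := by ring
    show (HH hvw (-x)).1.1 = _
    rw [e, M' (x-1)]
    show (HH hvw (x-1)).1.2 = _
    rw [gg_snd Hdeg hvw (x-1), sub_add_cancel]
  -- the period is even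
  have hev : ∃ m : ℕ, per X hvw = 2 * m := by
    rcases Nat.even_or_odd (per X hvw) with he | ho
    · obtain ⟨r, hr⟩ := he
      exact ⟨r, by omega⟩
    · exfalso
      obtain ⟨t, ht⟩ := ho
      have h0 : ((2*t+1 : ℕ) : ZMod (per X hvw)) = 0 := by
        rw [← ht]; exact ZMod.natCast_self _
      push_cast at h0
      have key : -1 - (t : ZMod (per X hvw)) = (t : ZMod (per X hvw)) := by
        linear_combination -h0
      have hsw := M' (t : ZMod (per X hvw))
      rw [key] at hsw
      have h1 : gg hvw (t : ZMod (per X hvw)) = gg hvw ((t : ZMod (per X hvw)) + 1) := by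
        rw [← gg_snd Hdeg hvw]
        exact congrArg (fun q => q.1.1) hsw
      have h2 := adj_gg Hdeg hvw (t : ZMod (per X hvw))
      rw [← h1] at h2
      exact X.loopless.irrefl _ h2
  obtain ⟨m, hm⟩ := hev
  have hm1 : 1 ≤ m := by omega
  -- injectivity on [0, m]
  have inj : ∀ i j : ℕ, i ≤ m → j ≤ m → gg hvw i = gg hvw j → i = j := by
    intro i j hi hj he
    rcases DICH Hdeg hvw he with h | h
    · have hc := HH_inj Hdeg hvw h
      have := (ZMod.natCast_eq_natCast_iff i j _).1 hc
      have h1 : i % per X hvw = j % per X hvw := this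
      rw [Nat.mod_eq_of_lt (by omega), Nat.mod_eq_of_lt (by omega)] at h1
      exact h1
    · have e : (-1 - ((j : ZMod (per X hvw)) - 1)) = -(j : ZMod (per X hvw)) := by ring
      have h2 : swD X (HH hvw ((j : ZMod (per X hvw)) - 1)) = HH hvw (-(j : ZMod (per X hvw))) := by
        rw [← M' ((j : ZMod (per X hvw)) - 1), e]
      rw [h2] at h
      have hc := HH_inj Hdeg hvw h
      have hz : ((i + j : ℕ) : ZMod (per X hvw)) = 0 := by push_cast; linear_combination hc
      have hdvd := (ZMod.natCast_eq_zero_iff _ _).1 hz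
      obtain ⟨k, hk⟩ := hdvd
      rcases Nat.eq_zero_or_pos k with hk0 | hk1
      · subst hk0
        rw [Nat.mul_zero] at hk
        omega
      · have h3 : per X hvw * 1 ≤ per X hvw * k := Nat.mul_le_mul_left _ hk1
        rw [Nat.mul_one] at h3
        rw [← hk] at h3
        omega
  -- boundary identities
  have h2m0 : ((2*m : ℕ) : ZMod (per X hvw)) = 0 := by rw [← hm]; exact ZMod.natCast_self _
  have bdry : gg hvw ((m : ZMod (per X hvw)) + 1) = gg hvw ((m-1 : ℕ) : ZMod (per X hvw)) := by
    have e : ((m : ZMod (per X hvw)) + 1) = -(((m-1 : ℕ)) : ZMod (per X hvw)) := by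
      push_cast [Nat.cast_sub hm1] at h2m0 ⊢
      linear_combination h2m0
    rw [e, mir]
  have bdry0 : gg hvw ((0 : ZMod (per X hvw)) - 1) = gg hvw ((1:ℕ) : ZMod (per X hvw)) := by
    have e : ((0 : ZMod (per X hvw)) - 1) = -(((1:ℕ)) : ZMod (per X hvw)) := by push_cast; ring
    rw [e, mir]
  -- surjectivity
  have surjT : ∀ v : V, ∃ i : ℕ, i ≤ m ∧ gg hvw i = v := by
    have h0 : v₀ ∈ {v : V | ∃ i : ℕ, i ≤ m ∧ gg hvw i = v} :=
      ⟨0, by omega, by rw [Nat.cast_zero]; exact gg_zero hvw⟩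
    refine reach_all hconn _ h0 ?_
    rintro v w ⟨i, hi, rfl⟩ hadj
    rcases NB Hdeg hvw hadj with h | h
    · by_cases him : i < m
      · exact ⟨i+1, by omega, by rw [h]; push_cast; ring_nf⟩
      · have him' : i = m := by omega
        refine ⟨m-1, by omega, ?_⟩
        rw [h, him', bdry]
    · by_cases hi0 : 1 ≤ i
      · refine ⟨i-1, by omega, ?_⟩
        rw [h]
        push_cast [Nat.cast_sub hi0]
        ring_nf
      · have hi0' : i = 0 := by omega
        subst hi0'
        exact ⟨1, by omega, by rw [h, Nat.cast_zero, bdry0]⟩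
  -- the bijection
  have hAdj : ∀ a b : Fin (m+1),
      X.Adj (gg hvw (a.val : ZMod (per X hvw))) (gg hvw (b.val : ZMod (per X hvw))) ↔
        (a.val + 1 = b.val ∨ b.val + 1 = a.val) := by
    intro a b
    constructor
    · intro hadj
      rcases NB Hdeg hvw hadj with h | h
      · by_cases him : a.val < m
        · left
          have he : gg hvw ((b.val : ℕ) : ZMod (per X hvw))
              = gg hvw ((a.val + 1 : ℕ) : ZMod (per X hvw)) := by
            rw [h]; push_cast; ring_nf
          have := inj b.val (a.val+1) (by omega) (by omega) he
          omega
        · have him' : (a.val : ℕ) = m := by omega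
          right
          have he : gg hvw ((b.val : ℕ) : ZMod (per X hvw))
              = gg hvw ((m - 1 : ℕ) : ZMod (per X hvw)) := by
            rw [h, him', bdry]
          have := inj b.val (m-1) (by omega) (by omega) he
          omega
      · by_cases hi0 : 1 ≤ a.val
        · right
          have he : gg hvw ((b.val : ℕ) : ZMod (per X hvw))
              = gg hvw ((a.val - 1 : ℕ) : ZMod (per X hvw)) := by
            rw [h]; push_cast [Nat.cast_sub hi0]; ring_nf
          have := inj b.val (a.val-1) (by omega) (by omega) he
          omega
        · left
          have hi0' : (a.val : ℕ) = 0 := by omega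
          have he : gg hvw ((b.val : ℕ) : ZMod (per X hvw))
              = gg hvw ((1 : ℕ) : ZMod (per X hvw)) := by
            rw [h, hi0', Nat.cast_zero, bdry0]
          have := inj b.val 1 (by omega) (by omega) he
          omega
    · intro h
      rcases h with h | h
      · have hb : ((b.val : ℕ) : ZMod (per X hvw)) = (a.val : ZMod (per X hvw)) + 1 := by
          rw [← h]; push_cast; ring
        rw [hb]
        exact adj_gg Hdeg hvw _
      · have hb : ((a.val : ℕ) : ZMod (per X hvw)) = (b.val : ZMod (per X hvw)) + 1 := by
          rw [← h]; push_cast; ring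
        rw [hb]
        exact (adj_gg Hdeg hvw _).symm
  refine ⟨m+1, by omega, ⟨?_⟩⟩
  refine (SimpleGraph.Iso.symm
    ⟨Equiv.ofBijective (fun a : Fin (m+1) => gg hvw (a.val : ZMod (per X hvw))) ⟨?_, ?_⟩, ?_⟩)
  · intro a b he
    exact Fin.ext (inj a.val b.val (by omega) (by omega) he)
  · intro v
    obtain ⟨i, hi, he⟩ := surjT v
    exact ⟨⟨i, by omega⟩, he⟩
  · intro a b
    rw [SimpleGraph.pathGraph_adj]
    exact hAdj a b

end PathCase

section CycCase

open Fin.CommRing in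
lemma cyc_build {V : Type*} {X : SimpleGraph V} (p : ℕ) (hp : 3 ≤ p) (g : ZMod p → V)
    (hbij : Function.Bijective g)
    (hAdj : ∀ x y : ZMod p, X.Adj (g x) (g y) ↔ (y = x + 1 ∨ y = x - 1)) :
    Nonempty (X ≃g cycleGraph p) := by
  obtain ⟨m, rfl⟩ : ∃ m, p = m + 2 := ⟨p - 2, by omega⟩
  refine ⟨(SimpleGraph.Iso.symm ⟨Equiv.ofBijective (fun a : Fin (m+2) => g a) hbij, ?_⟩)⟩
  intro a b
  rw [SimpleGraph.cycleGraph_adj]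
  show X.Adj (g a) (g b) ↔ _
  rw [hAdj a b]
  constructor
  · rintro (h | h)
    · right
      show (b : ZMod (m+2)) - a = 1
      exact (fun x y : ZMod (m+2) => fun hh : y = x + 1 => (by linear_combination hh : y - x = 1)) a b h
    · left
      show (a : ZMod (m+2)) - b = 1
      exact (fun x y : ZMod (m+2) => fun hh : y = x - 1 => (by linear_combination -hh : x - y = 1)) a b h
  · rintro (h | h)
    · right
      show (b : ZMod (m+2)) = a - 1
      linear_combination -h
    · left
      show (b : ZMod (m+2)) = a + 1
      linear_combination h

variable {V : Type*} [Finite V] {X : SimpleGraph V} {v₀ w₀ : V}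

lemma cyc_case (hconn : X.Connected)
    (Hdeg : ∀ v a b c : V, X.Adj v a → X.Adj v b → X.Adj v c → a = b ∨ a = c ∨ b = c)
    (hvw : X.Adj v₀ w₀) (hdeg2 : ∀ a b : V, X.Adj a b → ∃ u, X.Adj a u ∧ u ≠ b) :
    ∃ n, 3 ≤ n ∧ Nonempty (X ≃g cycleGraph n) := by
  haveI : NeZero (per X hvw) := ⟨(per_pos Hdeg hvw).ne'⟩
  have hppos : 0 < per X hvw := per_pos Hdeg hvw
  -- no reflections
  have NR : ∀ x : ZMod (per X hvw), gg hvw (x + 1) ≠ gg hvw (x - 1) := by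
    intro x heq
    have hrel := nxt_rel Hdeg hvw x
    rw [heq] at hrel
    have hall := nxt_eq_self_iff.1 hrel.symm
    have hadj : X.Adj (gg hvw x) (gg hvw (x-1)) := by
      have := adj_gg Hdeg hvw (x - 1)
      rw [sub_add_cancel] at this
      exact this.symm
    obtain ⟨u, hu, hne⟩ := hdeg2 (gg hvw x) (gg hvw (x-1)) hadj
    exact hne (hall u hu)
  -- p ≥ 3
  have hp3 : 3 ≤ per X hvw := by
    by_contra hlt
    have hdvd : per X hvw ∣ 2 := by
      have h12 : per X hvw = 1 ∨ per X hvw = 2 := by omega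
      rcases h12 with h | h
      · rw [h]; exact one_dvd 2
      · rw [h]
    have h2 : ((2:ℕ) : ZMod (per X hvw)) = 0 := (ZMod.natCast_eq_zero_iff _ _).2 hdvd
    have he : (0 : ZMod (per X hvw)) + 1 = 0 - 1 := by push_cast at h2; linear_combination h2
    exact NR 0 (congrArg (gg hvw) he)
  -- injectivity
  have injAsym : ∀ i j : ℕ, i < j → j < per X hvw → gg hvw i = gg hvw j → False := by
    intro i j hij hjp he
    rcases DICH Hdeg hvw he with h | h
    · have hc := HH_inj Hdeg hvw h
      have h1 : i % per X hvw = j % per X hvw := (ZMod.natCast_eq_natCast_iff i j _).1 hc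
      rw [Nat.mod_eq_of_lt (by omega), Nat.mod_eq_of_lt (by omega)] at h1
      omega
    · have key := PROP Hdeg hvw h
      rcases Nat.even_or_odd (j - i) with ⟨t, ht⟩ | ⟨t, ht⟩
      · -- j = i + 2t, t ≥ 1
        have ht' : j = i + 2*t := by omega
        have ht1 : 1 ≤ t := by omega
        have e1 : ((i : ZMod (per X hvw)) + (t:ℕ)) = ((i + t - 1 : ℕ) : ZMod (per X hvw)) + 1 := by
          push_cast [Nat.cast_sub (by omega : 1 ≤ i + t)]
          ring
        have e2 : ((j : ZMod (per X hvw)) - 1 - (t:ℕ)) = ((i + t - 1 : ℕ) : ZMod (per X hvw)) := by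
          rw [ht']
          push_cast [Nat.cast_sub (by omega : 1 ≤ i + t)]
          ring
        have hk := key (t : ℕ)
        rw [e1, e2] at hk
        -- second components
        have hsnd : gg hvw ((((i + t - 1 : ℕ) : ZMod (per X hvw)) + 1) + 1)
            = gg hvw ((i + t - 1 : ℕ) : ZMod (per X hvw)) := by
          rw [← gg_snd Hdeg hvw, hk]
          show (HH hvw _).1.1 = _
          rfl
        have := NR (((i + t - 1 : ℕ) : ZMod (per X hvw)) + 1)
        apply this
        rw [hsnd]
        congr 1
        ring
      · -- j = i + 2t + 1
        have ht' : j = i + 2*t + 1 := by omega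
        have e2 : ((j : ZMod (per X hvw)) - 1 - (t:ℕ)) = ((i : ZMod (per X hvw)) + (t:ℕ)) := by
          rw [ht']; push_cast; ring
        have hk := key (t : ℕ)
        rw [e2] at hk
        have h1 : gg hvw ((i : ZMod (per X hvw)) + (t:ℕ))
            = gg hvw (((i : ZMod (per X hvw)) + (t:ℕ)) + 1) := by
          rw [← gg_snd Hdeg hvw]
          exact congrArg (fun q => q.1.1) hk
        have h2 := adj_gg Hdeg hvw ((i : ZMod (per X hvw)) + (t:ℕ))
        rw [← h1] at h2
        exact X.loopless.irrefl _ h2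
  have ginj : Function.Injective (gg hvw) := by
    intro x y h
    have hx : ((x.val : ℕ) : ZMod (per X hvw)) = x := ZMod.natCast_rightInverse x
    have hy : ((y.val : ℕ) : ZMod (per X hvw)) = y := ZMod.natCast_rightInverse y
    rw [← hx, ← hy] at h
    rcases lt_trichotomy x.val y.val with hlt | heq | hlt
    · exact absurd h (fun h => injAsym x.val y.val hlt (ZMod.val_lt y) h)
    · exact ZMod.val_injective _ heq
    · exact absurd h.symm (fun h => injAsym y.val x.val hlt (ZMod.val_lt x) h)
  have gsurj : Function.Surjective (gg hvw) := by
    intro v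
    have h0 : v₀ ∈ Set.range (gg hvw) := ⟨0, gg_zero hvw⟩
    refine reach_all hconn _ h0 ?_ v
    rintro v w ⟨x, rfl⟩ hadj
    rcases NB Hdeg hvw hadj with h | h
    · exact ⟨x + 1, h.symm⟩
    · exact ⟨x - 1, h.symm⟩
  have hAdj : ∀ x y : ZMod (per X hvw),
      X.Adj (gg hvw x) (gg hvw y) ↔ (y = x + 1 ∨ y = x - 1) := by
    intro x y
    constructor
    · intro hadj
      rcases NB Hdeg hvw hadj with h | h
      · exact Or.inl (ginj h)
      · exact Or.inr (ginj h)
    · rintro (rfl | rfl)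
      · exact adj_gg Hdeg hvw x
      · have := adj_gg Hdeg hvw (x - 1)
        rw [sub_add_cancel] at this
        exact this.symm
  exact ⟨per X hvw, hp3, cyc_build _ hp3 (gg hvw) ⟨ginj, gsurj⟩ hAdj⟩

end CycCase

section Classification

lemma classification {V : Type*} [Finite V] {X : SimpleGraph V} (hconn : X.Connected)
    (hE : X.edgeSet.Nonempty)
    (Hdeg : ∀ v a b c : V, X.Adj v a → X.Adj v b → X.Adj v c → a = b ∨ a = c ∨ b = c) :
    (∃ n, 3 ≤ n ∧ Nonempty (X ≃g cycleGraph n)) ∨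
      (∃ n, 2 ≤ n ∧ Nonempty (X ≃g pathGraph n)) := by
  by_cases hleaf : ∃ v w : V, X.Adj v w ∧ ∀ u, X.Adj v u → u = w
  · right
    obtain ⟨v, w, hvw, hall⟩ := hleaf
    exact path_case hconn Hdeg hvw hall
  · left
    push_neg at hleaf
    obtain ⟨e, he⟩ := hE
    obtain ⟨⟨a, b⟩, rfl⟩ := Quot.exists_rep e
    have hadj : X.Adj a b := (SimpleGraph.mem_edgeSet _).1 he
    exact cyc_case hconn Hdeg hadj (fun a b h => hleaf a b h)

end Classification

section Forward

lemma no_three {V : Type*} {X : SimpleGraph V}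
    (hiso : Nonempty ((kroneckerCover X).lineGraph ≃g kroneckerCover X.lineGraph)) :
    ∀ v a b c : V, X.Adj v a → X.Adj v b → X.Adj v c → a = b ∨ a = c ∨ b = c := by
  obtain ⟨φ⟩ := hiso
  intro v a b c hva hvb hvc
  by_contra hcon
  push_neg at hcon
  obtain ⟨hab, hac, hbc⟩ := hcon
  have mk : ∀ w : V, X.Adj v w → s((v, false), (w, true)) ∈ (kroneckerCover X).edgeSet :=
    fun w hw => (SimpleGraph.mem_edgeSet _).2 (show X.Adj _ _ ∧ _ from ⟨hw, by simp⟩)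
  set e₁ : (kroneckerCover X).edgeSet := ⟨_, mk a hva⟩
  set e₂ : (kroneckerCover X).edgeSet := ⟨_, mk b hvb⟩
  set e₃ : (kroneckerCover X).edgeSet := ⟨_, mk c hvc⟩
  have hadj : ∀ (x y : V), x ≠ y → ∀ (hx : X.Adj v x) (hy : X.Adj v y),
      (kroneckerCover X).lineGraph.Adj ⟨_, mk x hx⟩ ⟨_, mk y hy⟩ := by
    intro x y hxy hx hy
    rw [SimpleGraph.lineGraph_adj_iff_exists]
    refine ⟨?_, (v, false), Sym2.mem_mk_left _ _, Sym2.mem_mk_left _ _⟩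
    intro hcontra
    rw [Subtype.mk.injEq, Sym2.eq_iff] at hcontra
    rcases hcontra with ⟨-, h2⟩ | ⟨h1, -⟩
    · exact hxy (congrArg Prod.fst h2)
    · simpa using congrArg Prod.snd h1
  have h12 := (φ.map_adj_iff.2 (hadj a b hab hva hvb) : X.lineGraph.Adj (φ e₁).1 (φ e₂).1 ∧ (φ e₁).2 ≠ (φ e₂).2).2
  have h13 := (φ.map_adj_iff.2 (hadj a c hac hva hvc) : X.lineGraph.Adj (φ e₁).1 (φ e₃).1 ∧ (φ e₁).2 ≠ (φ e₃).2).2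
  have h23 := (φ.map_adj_iff.2 (hadj b c hbc hvb hvc) : X.lineGraph.Adj (φ e₂).1 (φ e₃).1 ∧ (φ e₂).2 ≠ (φ e₃).2).2
  cases hb1 : (φ e₁).2 <;> cases hb2 : (φ e₂).2 <;> cases hb3 : (φ e₃).2 <;> simp_all

end Forward


variable {V : Type*} {X : SimpleGraph V}

lemma bool_ne_of_eq_not {b c : Bool} (h : b = (!c)) : b ≠ c := by
  cases b <;> cases c <;> simp_all

lemma bool_ne_of_not_eq {b c : Bool} (h : (!b) = c) : b ≠ c := by
  cases b <;> cases c <;> simp_all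

lemma bool_eq_not_of_ne {b c : Bool} (h : b ≠ c) : c = (!b) := by
  cases b <;> cases c <;> simp_all

lemma bool_not_eq_of_ne {b c : Bool} (h : b ≠ c) : (!c) = b := by
  cases b <;> cases c <;> simp_all

lemma bool_eq_of_not_eq_not {b c : Bool} (h : (!b) = (!c)) : b = c := by
  cases b <;> cases c <;> simp_all

/-- The candidate isomorphism as a map on vertices. -/
noncomputable def oriF (t h : X.edgeSet → V) (H1a : ∀ e, X.Adj (t e) (h e)) :
    X.edgeSet × Bool → (kroneckerCover X).edgeSet :=
  fun q => ⟨s((t q.1, q.2), (h q.1, !q.2)),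
    (SimpleGraph.mem_edgeSet _).2 (show X.Adj _ _ ∧ _ from ⟨H1a q.1, by simp⟩)⟩

lemma oriF_coe (t h : X.edgeSet → V) (H1a : ∀ e, X.Adj (t e) (h e)) (e : X.edgeSet) (b : Bool) :
    (oriF t h H1a (e, b) : Sym2 (V × Bool)) = s((t e, b), (h e, !b)) := rfl

variable (t h : X.edgeSet → V)
  (H1a : ∀ e, X.Adj (t e) (h e))
  (H1b : ∀ e : X.edgeSet, s(t e, h e) = (e : Sym2 V))
  (H2 : ∀ e f : X.edgeSet, e ≠ f → ∀ v : V, v ∈ (e : Sym2 V) → v ∈ (f : Sym2 V) →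
      (v = h e ∧ v = t f) ∨ (v = t e ∧ v = h f))

include H1b in
lemma ori_t_mem (e : X.edgeSet) : t e ∈ (e : Sym2 V) := by
  rw [← H1b e]; exact Sym2.mem_mk_left _ _

include H1b in
lemma ori_h_mem (e : X.edgeSet) : h e ∈ (e : Sym2 V) := by
  rw [← H1b e]; exact Sym2.mem_mk_right _ _

include H1b in
lemma oriF_inj : Function.Injective (oriF t h H1a) := by
  rintro ⟨e, b⟩ ⟨f, c⟩ hqr
  rw [Subtype.ext_iff, oriF_coe, oriF_coe, Sym2.eq_iff] at hqr
  simp only [Prod.mk.injEq] at hqr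
  rcases hqr with ⟨h1, h2⟩ | ⟨h1, h2⟩
  · have hef : e = f := Subtype.ext (by rw [← H1b e, ← H1b f, h1.1, h2.1])
    exact Prod.ext hef h1.2
  · exfalso
    have hef : e = f := Subtype.ext (by
      rw [← H1b e, ← H1b f, h1.1, h2.1]
      exact Sym2.eq_swap)
    exact (H1a e).ne (h1.1.trans (congrArg h hef.symm))

include H1b in
lemma oriF_surj : Function.Surjective (oriF t h H1a) := by
  rintro ⟨E, hE⟩
  revert hE
  induction E using Sym2.ind with
  | _ x y =>
    intro hE
    obtain ⟨hxy, hne⟩ := (show X.Adj x.1 y.1 ∧ x.2 ≠ y.2 from (SimpleGraph.mem_edgeSet _).1 hE)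
    have hsp := H1b ⟨s(x.1, y.1), hxy⟩
    rw [Sym2.eq_iff] at hsp
    rcases hsp with ⟨h1, h2⟩ | ⟨h1, h2⟩
    · refine ⟨(⟨s(x.1, y.1), hxy⟩, x.2), Subtype.ext ?_⟩
      have hb : (!x.2) = y.2 := bool_not_eq_of_ne (fun hc => hne hc.symm)
      rw [oriF_coe, h1, h2, hb, Prod.mk.eta, Prod.mk.eta]
    · refine ⟨(⟨s(x.1, y.1), hxy⟩, y.2), Subtype.ext ?_⟩
      have hb : (!y.2) = x.2 := bool_not_eq_of_ne hne
      rw [oriF_coe, h1, h2, hb, Prod.mk.eta, Prod.mk.eta]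
      exact Sym2.eq_swap

include H1b H2 in
lemma oriF_adj (q r : X.edgeSet × Bool) :
    (kroneckerCover X).lineGraph.Adj (oriF t h H1a q) (oriF t h H1a r) ↔
      (kroneckerCover X.lineGraph).Adj q r := by
  obtain ⟨e, b⟩ := q
  obtain ⟨f, c⟩ := r
  show _ ↔ (X.lineGraph.Adj e f ∧ b ≠ c)
  rw [SimpleGraph.lineGraph_adj_iff_exists, SimpleGraph.lineGraph_adj_iff_exists]
  by_cases hef : e = f
  · subst hef
    constructor
    · rintro ⟨hne, x, hx1, hx2⟩
      exfalso
      rw [oriF_coe, Sym2.mem_iff] at hx1 hx2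
      rcases hx1 with h1 | h1 <;> rcases hx2 with h2 | h2 <;> rw [h1] at h2 <;>
        rw [Prod.mk.injEq] at h2
      · exact hne (by rw [h2.2])
      · exact (H1a e).ne h2.1
      · exact (H1a e).ne' h2.1
      · exact hne (by rw [bool_eq_of_not_eq_not h2.2])
    · rintro ⟨⟨hne, -⟩, -⟩
      exact absurd rfl hne
  · constructor
    · rintro ⟨hne, x, hx1, hx2⟩
      rw [oriF_coe, Sym2.mem_iff] at hx1 hx2
      rcases hx1 with h1 | h1 <;> rcases hx2 with h2 | h2 <;> rw [h1] at h2 <;>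
        rw [Prod.mk.injEq] at h2
      · exfalso
        have hm2 : t e ∈ (f : Sym2 V) := by rw [h2.1]; exact ori_t_mem t h H1b f
        rcases H2 e f hef (t e) (ori_t_mem t h H1b e) hm2 with ⟨ha, -⟩ | ⟨-, hb'⟩
        · exact (H1a e).ne ha
        · exact (H1a f).ne' (hb'.symm.trans h2.1)
      · have hm2 : t e ∈ (f : Sym2 V) := by rw [h2.1]; exact ori_h_mem t h H1b f
        exact ⟨⟨hef, t e, ori_t_mem t h H1b e, hm2⟩, bool_ne_of_eq_not h2.2⟩
      · have hm2 : h e ∈ (f : Sym2 V) := by rw [h2.1]; exact ori_t_mem t h H1b f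
        exact ⟨⟨hef, h e, ori_h_mem t h H1b e, hm2⟩, bool_ne_of_not_eq h2.2⟩
      · exfalso
        have hm2 : h e ∈ (f : Sym2 V) := by rw [h2.1]; exact ori_h_mem t h H1b f
        rcases H2 e f hef (h e) (ori_h_mem t h H1b e) hm2 with ⟨-, hb'⟩ | ⟨ha, -⟩
        · exact (H1a f).ne (h2.1.symm.trans hb').symm
        · exact (H1a e).ne ha.symm
    · rintro ⟨⟨-, x, hxe, hxf⟩, hbc⟩
      have hFne : oriF t h H1a (e, b) ≠ oriF t h H1a (f, c) := by
        intro hFF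
        exact hef (congrArg Prod.fst (oriF_inj t h H1a H1b hFF))
      rcases H2 e f hef x hxe hxf with ⟨ha, hb'⟩ | ⟨ha, hb'⟩
      · refine ⟨hFne, (x, !b), ?_, ?_⟩
        · rw [oriF_coe, Sym2.mem_iff]
          right
          rw [ha]
        · rw [oriF_coe, Sym2.mem_iff]
          left
          have hcb : c = (!b) := bool_eq_not_of_ne hbc
          rw [hb', hcb]
      · refine ⟨hFne, (x, b), ?_, ?_⟩
        · rw [oriF_coe, Sym2.mem_iff]
          left
          rw [ha]
        · rw [oriF_coe, Sym2.mem_iff]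
          right
          have hcb : (!c) = b := bool_not_eq_of_ne hbc
          rw [hb', hcb]

include H1a H1b H2 in
lemma ori_iso : Nonempty ((kroneckerCover X).lineGraph ≃g kroneckerCover X.lineGraph) :=
  ⟨(⟨Equiv.ofBijective (oriF t h H1a) ⟨oriF_inj t h H1a H1b, oriF_surj t h H1a H1b⟩,
    fun {q r} => oriF_adj t h H1a H1b H2 q r⟩ :
      kroneckerCover X.lineGraph ≃g (kroneckerCover X).lineGraph).symm⟩


section GoodOri

/-- A "good orientation": every edge is oriented, and whenever two distinct edges share a
vertex, they meet head-to-tail. -/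
def GoodOri {V : Type*} (X : SimpleGraph V) : Prop :=
  ∃ t h : X.edgeSet → V, (∀ e, X.Adj (t e) (h e)) ∧
    (∀ e : X.edgeSet, s(t e, h e) = (e : Sym2 V)) ∧
    (∀ e f : X.edgeSet, e ≠ f → ∀ v : V, v ∈ (e : Sym2 V) → v ∈ (f : Sym2 V) →
      (v = h e ∧ v = t f) ∨ (v = t e ∧ v = h f))

lemma goodOri_of_iso {V W : Type*} {X : SimpleGraph V} {Y : SimpleGraph W} (φ : X ≃g Y)
    (hY : GoodOri Y) : GoodOri X := by
  obtain ⟨t, h, h1a, h1b, h2⟩ := hY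
  have hcoe : ∀ e : X.edgeSet, ((φ.mapEdgeSet e : Y.edgeSet) : Sym2 W)
      = Sym2.map φ (e : Sym2 V) := fun e => rfl
  have hcomp : (⇑(φ.symm) ∘ ⇑φ) = id := funext fun v => RelIso.symm_apply_apply φ v
  refine ⟨fun e => φ.symm (t (φ.mapEdgeSet e)), fun e => φ.symm (h (φ.mapEdgeSet e)),
    ?_, ?_, ?_⟩
  · intro e
    exact φ.symm.map_adj_iff.2 (h1a (φ.mapEdgeSet e))
  · intro e
    calc s(φ.symm (t (φ.mapEdgeSet e)), φ.symm (h (φ.mapEdgeSet e)))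
        = Sym2.map φ.symm s(t (φ.mapEdgeSet e), h (φ.mapEdgeSet e)) :=
          (Sym2.map_pair_eq _ _ _).symm
      _ = Sym2.map φ.symm (Sym2.map φ (e : Sym2 V)) := by rw [h1b _, hcoe]
      _ = (e : Sym2 V) := by rw [Sym2.map_map, hcomp, Sym2.map_id, id_eq]
  · intro e f hef v hve hvf
    have hne : φ.mapEdgeSet e ≠ φ.mapEdgeSet f :=
      fun hcon => hef (φ.mapEdgeSet.injective hcon)
    have hv1 : φ v ∈ ((φ.mapEdgeSet e : Y.edgeSet) : Sym2 W) := by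
      rw [hcoe]; exact Sym2.mem_map.2 ⟨v, hve, rfl⟩
    have hv2 : φ v ∈ ((φ.mapEdgeSet f : Y.edgeSet) : Sym2 W) := by
      rw [hcoe]; exact Sym2.mem_map.2 ⟨v, hvf, rfl⟩
    rcases h2 _ _ hne (φ v) hv1 hv2 with ⟨ha, hb⟩ | ⟨ha, hb⟩
    · exact Or.inl ⟨(RelIso.symm_apply_apply φ v).symm.trans (congrArg (⇑φ.symm) ha),
        (RelIso.symm_apply_apply φ v).symm.trans (congrArg (⇑φ.symm) hb)⟩
    · exact Or.inr ⟨(RelIso.symm_apply_apply φ v).symm.trans (congrArg (⇑φ.symm) ha),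
        (RelIso.symm_apply_apply φ v).symm.trans (congrArg (⇑φ.symm) hb)⟩

open Fin.CommRing in
lemma goodOri_cycle (n : ℕ) (hn : 3 ≤ n) : GoodOri (cycleGraph n) := by
  classical
  obtain ⟨m, rfl⟩ : ∃ m, n = m + 3 := ⟨n - 3, by omega⟩
  have EX : ∀ e : (cycleGraph (m+3)).edgeSet,
      ∃ u : Fin (m+3), (e : Sym2 (Fin (m+3))) = s(u, u+1) := by
    rintro ⟨e, he⟩
    revert he
    induction e using Sym2.ind with
    | _ a b =>
      intro he
      have hadj := (SimpleGraph.mem_edgeSet _).1 he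
      rw [SimpleGraph.cycleGraph_adj] at hadj
      show ∃ u, s(a, b) = s(u, u + 1)
      rcases hadj with h | h
      · refine ⟨b, ?_⟩
        rw [show a = b + 1 by linear_combination h]
        exact Sym2.eq_swap
      · refine ⟨a, ?_⟩
        rw [show b = a + 1 by linear_combination h]
  choose tl spec using EX
  refine ⟨tl, fun e => tl e + 1, ?_, ?_, ?_⟩
  · intro e
    rw [SimpleGraph.cycleGraph_adj]
    right
    show tl e + 1 - tl e = 1
    ring
  · intro e
    exact (spec e).symm
  · intro e f hef v hve hvf
    rw [spec e, Sym2.mem_iff] at hve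
    rw [spec f, Sym2.mem_iff] at hvf
    rcases hve with h1 | h1 <;> rcases hvf with h2 | h2
    · exfalso
      apply hef
      apply Subtype.ext
      rw [spec e, spec f, ← h1, ← h2]
    · exact Or.inr ⟨h1, h2⟩
    · exact Or.inl ⟨h1, h2⟩
    · exfalso
      apply hef
      apply Subtype.ext
      have : tl e = tl f := by
        have h3 := h1.symm.trans h2
        exact add_right_cancel h3
      rw [spec e, spec f, this]

lemma goodOri_path (n : ℕ) (hn : 2 ≤ n) : GoodOri (pathGraph n) := by
  classical
  obtain ⟨m, rfl⟩ : ∃ m, n = m + 2 := ⟨n - 2, by omega⟩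
  have EX : ∀ e : (pathGraph (m+2)).edgeSet,
      ∃ u : Fin (m+2), (e : Sym2 (Fin (m+2))) = s(u, u+1)
        ∧ (u + 1 : Fin (m+2)).val = u.val + 1 := by
    rintro ⟨e, he⟩
    revert he
    induction e using Sym2.ind with
    | _ a b =>
      intro he
      have hadj := (SimpleGraph.mem_edgeSet _).1 he
      rw [SimpleGraph.pathGraph_adj] at hadj
      show ∃ u, s(a, b) = s(u, u + 1) ∧ _
      rcases hadj with h | h
      · have hlt : a < Fin.last (m+1) := by
          rw [Fin.lt_def]
          have := b.isLt
          simp only [Fin.val_last]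
          omega
        have hval : (a + 1 : Fin (m+2)).val = a.val + 1 := Fin.val_add_one_of_lt hlt
        have hb : b = a + 1 := Fin.ext (by rw [hval, h])
        exact ⟨a, by rw [hb], hval⟩
      · have hlt : b < Fin.last (m+1) := by
          rw [Fin.lt_def]
          have := a.isLt
          simp only [Fin.val_last]
          omega
        have hval : (b + 1 : Fin (m+2)).val = b.val + 1 := Fin.val_add_one_of_lt hlt
        have ha : a = b + 1 := Fin.ext (by rw [hval, h])
        exact ⟨b, by rw [ha]; exact Sym2.eq_swap, hval⟩
  choose tl spec1 spec2 using EX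
  refine ⟨tl, fun e => tl e + 1, ?_, ?_, ?_⟩
  · intro e
    rw [SimpleGraph.pathGraph_adj]
    left
    exact (spec2 e).symm
  · intro e
    exact (spec1 e).symm
  · intro e f hef v hve hvf
    rw [spec1 e, Sym2.mem_iff] at hve
    rw [spec1 f, Sym2.mem_iff] at hvf
    rcases hve with h1 | h1 <;> rcases hvf with h2 | h2
    · exfalso
      apply hef
      apply Subtype.ext
      rw [spec1 e, spec1 f, ← h1, ← h2]
    · exact Or.inr ⟨h1, h2⟩
    · exact Or.inl ⟨h1, h2⟩
    · exfalso
      apply hef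
      apply Subtype.ext
      have : tl e = tl f := by
        have h3 := h1.symm.trans h2
        exact add_right_cancel h3
      rw [spec1 e, spec1 f, this]

end GoodOri

end KCProof

/-- For a finite connected simple graph `X` with at least one edge, `L(X'') ≅ L(X)''` if and
only if `X` is a cycle graph `Cₙ` (`n ≥ 3`) or a path graph `Pₙ` (`n ≥ 2`). -/
theorem lineGraph_kroneckerCover_iso_kroneckerCover_lineGraph_iff {V : Type*} [Fintype V]
    (X : SimpleGraph V) (hconn : X.Connected) (hE : X.edgeSet.Nonempty) :
    Nonempty ((kroneckerCover X).lineGraph ≃g kroneckerCover X.lineGraph) ↔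
      ((∃ n : ℕ, 3 ≤ n ∧ Nonempty (X ≃g cycleGraph n)) ∨
        (∃ n : ℕ, 2 ≤ n ∧ Nonempty (X ≃g pathGraph n))) := by
  constructor
  · intro hiso
    exact KCProof.classification hconn hE (KCProof.no_three hiso)
  · rintro (⟨n, hn, ⟨φ⟩⟩ | ⟨n, hn, ⟨φ⟩⟩)
    · obtain ⟨t, h, h1a, h1b, h2⟩ := KCProof.goodOri_of_iso φ (KCProof.goodOri_cycle n hn)
      exact KCProof.ori_iso t h h1a h1b h2
    · obtain ⟨t, h, h1a, h1b, h2⟩ := KCProof.goodOri_of_iso φ (KCProof.goodOri_path n hn)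
      exact KCProof.ori_iso t h h1a h1b h2
end
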